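/- MBAR/softmax classification optimality for free energies: let p_1,...,p_N be probability densities of the form p_i(y) = exp(−U_i(y) + F_i^*) with known energies U_i and true log-normalizers F_i^* = −log ∫ exp(−U_i). Define the objective over F = (F_1,...,F_N): J(F) = −(1/N) Σ_i E_{p_i}[ log( exp(−U_i(Y)+F_i) / Σ_j exp(−U_j(Y)+F_j) ) ]. Then F = F^* + c·(1,...,1) for any constant c is a global minimizer of J, i.e., J(F^* + c·1) ≤ J(F) for all F ∈ R^N. -/

import Mathlib

open MeasureTheory

/-- Gibbs' inequality, unnormalized form. -/
lemma gibbs_aux {N : ℕ} (a b : Fin N → ℝ) (ha : ∀ i, 0 < a i) (hb : ∀ i, 0 < b i) :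
    ∑ i, a i * Real.log (b i / ∑ j, b j) ≤ ∑ i, a i * Real.log (a i / ∑ j, a j) := by
  rcases Nat.eq_zero_or_pos N with h | h
  · subst h; simp
  have : NeZero N := ⟨h.ne'⟩
  have hne : (Finset.univ : Finset (Fin N)).Nonempty := Finset.univ_nonempty
  have hA : 0 < ∑ j, a j := Finset.sum_pos (fun i _ => ha i) hne
  have hB : 0 < ∑ j, b j := Finset.sum_pos (fun i _ => hb i) hne
  have key : ∀ i : Fin N,
      a i * Real.log (b i / ∑ j, b j) - a i * Real.log (a i / ∑ j, a j)
        ≤ b i * (∑ j, a j) / (∑ j, b j) - a i := by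
    intro i
    have hai := (ha i).ne'
    have hbi := (hb i).ne'
    have hA' := hA.ne'
    have hB' := hB.ne'
    have h1 : Real.log (b i / ∑ j, b j) - Real.log (a i / ∑ j, a j)
        = Real.log ((b i / ∑ j, b j) / (a i / ∑ j, a j)) := by
      rw [Real.log_div (div_pos (hb i) hB).ne' (div_pos (ha i) hA).ne',
        Real.log_div hbi hB', Real.log_div hai hA']
    have h2 : Real.log ((b i / ∑ j, b j) / (a i / ∑ j, a j))
        ≤ (b i / ∑ j, b j) / (a i / ∑ j, a j) - 1 :=
      Real.log_le_sub_one_of_pos (div_pos (div_pos (hb i) hB) (div_pos (ha i) hA))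
    calc a i * Real.log (b i / ∑ j, b j) - a i * Real.log (a i / ∑ j, a j)
        = a i * (Real.log (b i / ∑ j, b j) - Real.log (a i / ∑ j, a j)) := by ring
      _ = a i * Real.log ((b i / ∑ j, b j) / (a i / ∑ j, a j)) := by rw [h1]
      _ ≤ a i * ((b i / ∑ j, b j) / (a i / ∑ j, a j) - 1) :=
          mul_le_mul_of_nonneg_left h2 (ha i).le
      _ = b i * (∑ j, a j) / (∑ j, b j) - a i := by
          field_simp
  have h5 : ∑ i, (a i * Real.log (b i / ∑ j, b j) - a i * Real.log (a i / ∑ j, a j))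
      ≤ ∑ i, (b i * (∑ j, a j) / (∑ j, b j) - a i) :=
    Finset.sum_le_sum fun i _ => key i
  have h6 : ∑ i, (b i * (∑ j, a j) / (∑ j, b j) - a i) = 0 := by
    rw [Finset.sum_sub_distrib]
    have heq : ∑ i, b i * (∑ j, a j) / (∑ j, b j) = (∑ i, b i) * (∑ j, a j) / (∑ j, b j) := by
      rw [← Finset.sum_div, ← Finset.sum_mul]
    rw [heq, mul_comm, mul_div_assoc, div_self hB.ne', mul_one, sub_self]
  rw [Finset.sum_sub_distrib, h6] at h5
  linarith

/-- MBAR / softmax classification optimality for free energies: let `p_i` be the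
probability densities `p_i(y) = exp(−U_i(y) + F*_i)` with known energies `U_i` and true
log-normalizers `F*_i = −log ∫ exp(−U_i)`. With the multiclass cross-entropy objective
`J(F) = −(1/N) ∑ i E_{p_i}[log(exp(−U_i(Y)+F_i) / ∑ j exp(−U_j(Y)+F_j))]`,
any shift `F = F* + c·(1,…,1)` of the true log-normalizers is a global minimizer:
`J(F* + c·1) ≤ J(F)` for all `F ∈ ℝ^N`. -/
theorem mbar_softmax_optimality {d N : ℕ}
    (U : Fin N → EuclideanSpace ℝ (Fin d) → ℝ)
    (hU_meas : ∀ i, Measurable (U i))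
    (hU_int : ∀ i, Integrable (fun y => Real.exp (-U i y)))
    (Fstar : Fin N → ℝ)
    (hFstar : ∀ i, Fstar i = -Real.log (∫ y, Real.exp (-U i y)))
    (J : (Fin N → ℝ) → ℝ)
    (hJ : ∀ F, J F = -(1 / N : ℝ) * ∑ i, ∫ y,
        Real.exp (-U i y + Fstar i) *
          Real.log (Real.exp (-U i y + F i) / ∑ j, Real.exp (-U j y + F j)))
    (hJ_int : ∀ F : Fin N → ℝ, ∀ i, Integrable (fun y =>
        Real.exp (-U i y + Fstar i) *
          Real.log (Real.exp (-U i y + F i) / ∑ j, Real.exp (-U j y + F j))))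
    (c : ℝ) (F : Fin N → ℝ) :
    J (fun i => Fstar i + c) ≤ J F := by
  rw [hJ, hJ]
  set G : Fin N → ℝ := fun i => Fstar i + c with hG
  have hpt : ∀ y : EuclideanSpace ℝ (Fin d),
      (∑ i, Real.exp (-U i y + Fstar i) *
          Real.log (Real.exp (-U i y + F i) / ∑ j, Real.exp (-U j y + F j)))
      ≤ ∑ i, Real.exp (-U i y + Fstar i) *
          Real.log (Real.exp (-U i y + G i) / ∑ j, Real.exp (-U j y + G j)) := by
    intro y
    have hrw : ∀ i : Fin N,
        Real.exp (-U i y + G i) / ∑ j, Real.exp (-U j y + G j)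
          = Real.exp (-U i y + Fstar i) / ∑ j, Real.exp (-U j y + Fstar j) := by
      intro i
      have h1 : ∀ k : Fin N, Real.exp (-U k y + G k)
          = Real.exp (-U k y + Fstar k) * Real.exp c := by
        intro k
        rw [← Real.exp_add]
        simp only [hG]
        ring_nf
      have h2 : (∑ j, Real.exp (-U j y + G j))
          = (∑ j, Real.exp (-U j y + Fstar j)) * Real.exp c := by
        rw [Finset.sum_mul]
        exact Finset.sum_congr rfl fun j _ => h1 j
      rw [h1 i, h2, mul_div_mul_right _ _ (Real.exp_ne_zero c)]
    calc ∑ i, Real.exp (-U i y + Fstar i) *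
            Real.log (Real.exp (-U i y + F i) / ∑ j, Real.exp (-U j y + F j))
        ≤ ∑ i, Real.exp (-U i y + Fstar i) *
            Real.log (Real.exp (-U i y + Fstar i) / ∑ j, Real.exp (-U j y + Fstar j)) :=
          gibbs_aux _ _ (fun i => Real.exp_pos _) (fun i => Real.exp_pos _)
      _ = ∑ i, Real.exp (-U i y + Fstar i) *
            Real.log (Real.exp (-U i y + G i) / ∑ j, Real.exp (-U j y + G j)) := by
          exact Finset.sum_congr rfl fun i _ => by rw [hrw i]
  have hsum : (∑ i, ∫ y, Real.exp (-U i y + Fstar i) *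
          Real.log (Real.exp (-U i y + F i) / ∑ j, Real.exp (-U j y + F j)))
      ≤ ∑ i, ∫ y, Real.exp (-U i y + Fstar i) *
          Real.log (Real.exp (-U i y + G i) / ∑ j, Real.exp (-U j y + G j)) := by
    rw [← integral_finset_sum _ (fun i _ => hJ_int F i),
        ← integral_finset_sum _ (fun i _ => hJ_int G i)]
    exact integral_mono (integrable_finset_sum _ (fun i _ => hJ_int F i))
      (integrable_finset_sum _ (fun i _ => hJ_int G i)) hpt
  have hN : (0:ℝ) ≤ 1 / N := by positivity
  nlinarith [mul_le_mul_of_nonneg_left hsum hN]
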